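/- Let a,b,c be odd integers and d an even integer. Let R be a positive integer and let χ₀:{1,…,R-1}→{0,1} be a coloring such that there are no x,y,z ∈ {1,…,R-1} with ax+by+cz = d/2 and χ₀(x)=χ₀(y)=χ₀(z). Define χ:{1,…,2R-1}→ℤ/3ℤ by χ(n) = χ₀(n/2) if n is even, and χ(n) = 2 if n is odd. Then there are no x,y,z ∈ {1,…,2R-1} with ax+by+cz = d and χ(x)+χ(y)+χ(z) = 0 in ℤ/3ℤ. -/
import Mathlib


/-- `n` is 2-good for the equation `a*x + b*y + c*z = e`: `n` is a positive
integer and every 2-coloring of `{1,…,n}` admits a monochromatic solution of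
the equation with entries in `{1,…,n}`. -/
def TwoGoodEq (a b c e n : ℤ) : Prop :=
  0 < n ∧ ∀ χ : ℤ → Fin 2, ∃ x y z : ℤ,
    x ∈ Set.Icc 1 n ∧ y ∈ Set.Icc 1 n ∧ z ∈ Set.Icc 1 n ∧
    a * x + b * y + c * z = e ∧ χ x = χ y ∧ χ y = χ z

/-- `n` is (ℤ/3ℤ)-good for the equation `a*x + b*y + c*z = e`: `n` is a positive
integer and every (ℤ/3ℤ)-coloring of `{1,…,n}` admits a zero-sum solution of
the equation with entries in `{1,…,n}`. -/
def ZGoodEq (a b c e n : ℤ) : Prop :=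
  0 < n ∧ ∀ χ : ℤ → ZMod 3, ∃ x y z : ℤ,
    x ∈ Set.Icc 1 n ∧ y ∈ Set.Icc 1 n ∧ z ∈ Set.Icc 1 n ∧
    a * x + b * y + c * z = e ∧ χ x + χ y + χ z = 0

/-- The coloring used in the proof of Theorem thm:d: extend a 2-coloring
`χ₀` of `{1,…,R-1}` to a (ℤ/3ℤ)-coloring of `{1,…,2R-1}` by `χ(n) = χ₀(n/2)`
for `n` even and `χ(n) = 2` for `n` odd. -/
def chiExt (χ₀ : ℤ → Fin 2) (m : ℤ) : ZMod 3 :=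
  if Even m then (((χ₀ (m / 2)).val : ℕ) : ZMod 3) else 2

lemma fin2_cases (f : Fin 2) : f = 0 ∨ f = 1 := by
  revert f; decide

/-- Key step in the proof of Theorem thm:d: if `a, b, c` are odd, `d = 2e`, and
`χ₀ : {1,…,R-1} → {0,1}` admits no monochromatic solution of
`ax+by+cz = d/2`, then the extended coloring `chiExt χ₀` of `{1,…,2R-1}`
admits no zero-sum solution of `ax+by+cz = d`. -/
theorem thm_d_coloring (a b c d e R : ℤ) (ha : Odd a) (hb : Odd b) (hc : Odd c)
    (hd : d = 2 * e) (hR : 0 < R) (χ₀ : ℤ → Fin 2)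
    (h₀ : ¬ ∃ x y z : ℤ, x ∈ Set.Icc 1 (R - 1) ∧ y ∈ Set.Icc 1 (R - 1) ∧
      z ∈ Set.Icc 1 (R - 1) ∧ a * x + b * y + c * z = e ∧ χ₀ x = χ₀ y ∧ χ₀ y = χ₀ z) :
    ¬ ∃ x y z : ℤ, x ∈ Set.Icc 1 (2 * R - 1) ∧ y ∈ Set.Icc 1 (2 * R - 1) ∧
      z ∈ Set.Icc 1 (2 * R - 1) ∧ a * x + b * y + c * z = d ∧
      chiExt χ₀ x + chiExt χ₀ y + chiExt χ₀ z = 0 := by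
  rintro ⟨x, y, z, hx, hy, hz, heq, hs⟩
  simp only [Set.mem_Icc] at hx hy hz
  obtain ⟨ka, hka⟩ := ha
  obtain ⟨kb, hkb⟩ := hb
  obtain ⟨kc, hkc⟩ := hc
  subst hd hka hkb hkc
  rcases Int.even_or_odd x with ⟨px, hpx⟩ | ⟨px, hpx⟩ <;>
    rcases Int.even_or_odd y with ⟨py, hpy⟩ | ⟨py, hpy⟩ <;>
    rcases Int.even_or_odd z with ⟨pz, hpz⟩ | ⟨pz, hpz⟩ <;>
    subst hpx hpy hpz
  -- all even
  · apply h₀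
    have h2 : 2*((2*ka+1)*px + (2*kb+1)*py + (2*kc+1)*pz) = 2*e := by
      linear_combination heq
    refine ⟨px, py, pz, ?_, ?_, ?_, by linarith, ?_⟩
    · constructor <;> omega
    · constructor <;> omega
    · constructor <;> omega
    · have ex : (px + px) / 2 = px := by omega
      have ey : (py + py) / 2 = py := by omega
      have ez : (pz + pz) / 2 = pz := by omega
      simp only [chiExt, if_pos (⟨px, rfl⟩ : Even (px+px)), if_pos (⟨py, rfl⟩ : Even (py+py)), if_pos (⟨pz, rfl⟩ : Even (pz+pz)),
        ex, ey, ez] at hs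
      rcases fin2_cases (χ₀ px) with h1 | h1 <;>
        rcases fin2_cases (χ₀ py) with h2 | h2 <;>
        rcases fin2_cases (χ₀ pz) with h3 | h3 <;>
        simp [h1, h2, h3] at hs ⊢ <;> revert hs <;> decide
  -- parity contradictions and mixed cases
  · exfalso
    rw [show (2*ka+1)*(px+px) + (2*kb+1)*(py+py) + (2*kc+1)*(2*pz+1)
        = 2*(ka*(px+px)+px + kb*(py+py)+py + kc*(2*pz+1)+pz)+1 from by ring] at heq
    omega
  · exfalso
    rw [show (2*ka+1)*(px+px) + (2*kb+1)*(2*py+1) + (2*kc+1)*(pz+pz)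
        = 2*(ka*(px+px)+px + kb*(2*py+1)+py + kc*(pz+pz)+pz)+1 from by ring] at heq
    omega
  · have : ¬ Even (2 * py + 1) := by rw [Int.even_iff]; omega
    have : ¬ Even (2 * pz + 1) := by rw [Int.even_iff]; omega
    simp only [chiExt, if_pos (⟨px, rfl⟩ : Even (px+px)), if_neg ‹¬ Even (2 * py + 1)›,
      if_neg ‹¬ Even (2 * pz + 1)›] at hs
    rcases fin2_cases (χ₀ ((px + px) / 2)) with h1 | h1 <;>
      simp [h1] at hs <;> revert hs <;> decide
  · exfalso
    rw [show (2*ka+1)*(2*px+1) + (2*kb+1)*(py+py) + (2*kc+1)*(pz+pz)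
        = 2*(ka*(2*px+1)+px + kb*(py+py)+py + kc*(pz+pz)+pz)+1 from by ring] at heq
    omega
  · have : ¬ Even (2 * px + 1) := by rw [Int.even_iff]; omega
    have : ¬ Even (2 * pz + 1) := by rw [Int.even_iff]; omega
    simp only [chiExt, if_pos (⟨py, rfl⟩ : Even (py+py)), if_neg ‹¬ Even (2 * px + 1)›,
      if_neg ‹¬ Even (2 * pz + 1)›] at hs
    rcases fin2_cases (χ₀ ((py + py) / 2)) with h1 | h1 <;>
      simp [h1] at hs <;> revert hs <;> decide
  · have : ¬ Even (2 * px + 1) := by rw [Int.even_iff]; omega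
    have : ¬ Even (2 * py + 1) := by rw [Int.even_iff]; omega
    simp only [chiExt, if_pos (⟨pz, rfl⟩ : Even (pz+pz)), if_neg ‹¬ Even (2 * px + 1)›,
      if_neg ‹¬ Even (2 * py + 1)›] at hs
    rcases fin2_cases (χ₀ ((pz + pz) / 2)) with h1 | h1 <;>
      simp [h1] at hs <;> revert hs <;> decide
  · exfalso
    rw [show (2*ka+1)*(2*px+1) + (2*kb+1)*(2*py+1) + (2*kc+1)*(2*pz+1)
        = 2*(ka*(2*px+1)+px + kb*(2*py+1)+py + kc*(2*pz+1)+pz+1)+1 from by ring] at heq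
    omega
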